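/- Let E be a finite-dimensional real inner product space and let f, f̃, h : E → ℝ be differentiable with L-Lipschitz gradients, satisfying ‖∇f(y) − ∇h(y)‖² ≤ σ_g² and ‖∇f̃(y) − ∇h(y)‖² ≤ σ_g² for all y ∈ E. On a probability space with a sub-σ-algebra 𝓕, let x, x̃ be 𝓕-measurable square-integrable E-valued random vectors and let g, g̃ be square-integrable E-valued random vectors with E[g | 𝓕] = ∇f(x), E[g̃ | 𝓕] = ∇f̃(x̃), second moments E[‖g − ∇f(x)‖²] ≤ σ_l², E[‖g̃ − ∇f̃(x̃)‖²] ≤ σ_l², uncorrelated noises E[⟨g − ∇f(x), g̃ − ∇f̃(x̃)⟩] = 0, and suppose the exchangeability cancellation E[⟨x − x̃, ∇f(x) − ∇f̃(x̃)⟩] = E[⟨x − x̃, ∇f(x) − ∇f(x̃)⟩] holds. Then for every stepsize η > 0, E[‖(x − ηg) − (x̃ − ηg̃)‖²] ≤ (1 + 2ηL + 6η²L²) E[‖x − x̃‖²] + 4η²(σ_l² + 3σ_g²). -/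

import Mathlib

/-!
Write `D = x - xt` and `G = g - gt`, so that the left side is `𝔼‖D‖² - 2η 𝔼⟨D, G⟩ + η² 𝔼‖G‖²`.
As `D` is `𝓕`-measurable, `G` may be replaced in `𝔼⟨D, G⟩` by its conditional mean
`∇f(x) - ∇ft(xt)`, and the exchangeability cancellation turns this into
`𝔼⟨D, ∇f(x) - ∇f(xt)⟩ ≥ -L 𝔼‖D‖²`. For the same reason `G` splits orthogonally into its conditional
mean, of second moment at most `3L² 𝔼‖D‖² + 6σg²` (pass through `∇h`), and the noise difference,
of second moment at most `2σl²` since the two noises are uncorrelated.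
-/

section Deterministic

variable {E F : Type*} [SeminormedAddCommGroup E] [SeminormedAddCommGroup F]

theorem lipschitzWith_of_norm_sub_le {φ : E → F} {L : ℝ}
    (hφ : ∀ a b, ‖φ a - φ b‖ ≤ L * ‖a - b‖) : LipschitzWith L.toNNReal φ :=
  LipschitzWith.of_dist_le' fun a b ↦ by simpa only [dist_eq_norm] using hφ a b

theorem norm_add_add_sq_le (u v w : E) : ‖u + v + w‖ ^ 2 ≤ 3 * (‖u‖ ^ 2 + ‖v‖ ^ 2 + ‖w‖ ^ 2) := by
  have := norm_add₃_le (a := u) (b := v) (c := w)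
  nlinarith [norm_nonneg (u + v + w), sq_nonneg (‖u‖ - ‖v‖), sq_nonneg (‖u‖ - ‖w‖),
    sq_nonneg (‖v‖ - ‖w‖)]

theorem norm_sub_sq_le_of_near_lipschitz {φ ψ χ : E → F} {L σ : ℝ}
    (hχ : ∀ a b, ‖χ a - χ b‖ ≤ L * ‖a - b‖)
    (hφχ : ∀ y, ‖φ y - χ y‖ ^ 2 ≤ σ ^ 2) (hψχ : ∀ y, ‖ψ y - χ y‖ ^ 2 ≤ σ ^ 2) (a b : E) :
    ‖φ a - ψ b‖ ^ 2 ≤ 3 * L ^ 2 * ‖a - b‖ ^ 2 + 6 * σ ^ 2 := by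
  have hsplit : φ a - ψ b = (φ a - χ a) + (χ a - χ b) + -(ψ b - χ b) := by abel
  have hχab : ‖χ a - χ b‖ ^ 2 ≤ L ^ 2 * ‖a - b‖ ^ 2 := by
    rw [← mul_pow]
    exact pow_le_pow_left₀ (norm_nonneg _) (hχ a b) 2
  calc ‖φ a - ψ b‖ ^ 2
      ≤ 3 * (‖φ a - χ a‖ ^ 2 + ‖χ a - χ b‖ ^ 2 + ‖ψ b - χ b‖ ^ 2) := by
        rw [hsplit, ← norm_neg (ψ b - χ b)]
        exact norm_add_add_sq_le _ _ _
    _ ≤ 3 * L ^ 2 * ‖a - b‖ ^ 2 + 6 * σ ^ 2 := by linarith [hφχ a, hψχ b]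

end Deterministic

namespace MeasureTheory

section NormedGroup

variable {Ω E F : Type*} {mΩ : MeasurableSpace Ω} {μ : Measure Ω}
  [NormedAddCommGroup E] [NormedAddCommGroup F]

theorem _root_.LipschitzWith.comp_memLp_of_isFiniteMeasure [IsFiniteMeasure μ] {K : NNReal}
    {φ : E → F} (hφ : LipschitzWith K φ) {u : Ω → E} {p : ENNReal} (hu : MemLp u p μ) :
    MemLp (fun ω ↦ φ (u ω)) p μ := by
  have hφ₀ : LipschitzWith K fun y ↦ φ y - φ 0 := LipschitzWith.of_dist_le_mul fun a b ↦ by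
    simpa only [dist_sub_right] using hφ.dist_le_mul a b
  convert (hφ₀.comp_memLp (sub_self _) hu).add (memLp_const (φ 0)) using 1
  funext ω
  simp

theorem integral_norm_sub_sq_le_of_near_lipschitz [IsProbabilityMeasure μ] {φ ψ χ : E → F}
    {L σ : ℝ} (hχ : ∀ a b, ‖χ a - χ b‖ ≤ L * ‖a - b‖)
    (hφχ : ∀ y, ‖φ y - χ y‖ ^ 2 ≤ σ ^ 2) (hψχ : ∀ y, ‖ψ y - χ y‖ ^ 2 ≤ σ ^ 2)
    {u v : Ω → E} (hu : MemLp u 2 μ) (hv : MemLp v 2 μ) :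
    ∫ ω, ‖φ (u ω) - ψ (v ω)‖ ^ 2 ∂μ ≤ 3 * L ^ 2 * ∫ ω, ‖u ω - v ω‖ ^ 2 ∂μ + 6 * σ ^ 2 := by
  have huv : Integrable (fun ω ↦ ‖u ω - v ω‖ ^ 2) μ := (hu.sub hv).norm.integrable_sq
  have hbound := (huv.const_mul (3 * L ^ 2)).add (integrable_const (6 * σ ^ 2))
  calc ∫ ω, ‖φ (u ω) - ψ (v ω)‖ ^ 2 ∂μ
      ≤ ∫ ω, (3 * L ^ 2 * ‖u ω - v ω‖ ^ 2 + 6 * σ ^ 2) ∂μ :=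
        integral_mono_of_nonneg (ae_of_all _ fun _ ↦ sq_nonneg _) hbound
          (ae_of_all _ fun ω ↦ norm_sub_sq_le_of_near_lipschitz hχ hφχ hψχ (u ω) (v ω))
    _ = 3 * L ^ 2 * ∫ ω, ‖u ω - v ω‖ ^ 2 ∂μ + 6 * σ ^ 2 := by
        rw [integral_add (huv.const_mul _) (integrable_const _),
          integral_const_mul, integral_const, probReal_univ, one_smul]

end NormedGroup

section InnerProduct

variable {Ω E : Type*} {mΩ : MeasurableSpace Ω} {μ : Measure Ω}
  [NormedAddCommGroup E] [InnerProductSpace ℝ E]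

theorem MemLp.integrable_inner {u v : Ω → E} (hu : MemLp u 2 μ) (hv : MemLp v 2 μ) :
    Integrable (fun ω ↦ inner ℝ (u ω) (v ω)) μ :=
  (L2.integrable_inner (𝕜 := ℝ) (hu.toLp u) (hv.toLp v)).congr <| by
    filter_upwards [hu.coeFn_toLp, hv.coeFn_toLp] with ω hu' hv'
    rw [hu', hv']

theorem integral_norm_sub_sq {u v : Ω → E} (hu : MemLp u 2 μ) (hv : MemLp v 2 μ) :
    ∫ ω, ‖u ω - v ω‖ ^ 2 ∂μ =
      ∫ ω, ‖u ω‖ ^ 2 ∂μ - 2 * ∫ ω, inner ℝ (u ω) (v ω) ∂μ + ∫ ω, ‖v ω‖ ^ 2 ∂μ := by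
  have hu2 : Integrable (fun ω ↦ ‖u ω‖ ^ 2) μ := hu.norm.integrable_sq
  have huv : Integrable (fun ω ↦ 2 * inner ℝ (u ω) (v ω)) μ := (hu.integrable_inner hv).const_mul 2
  have hdiff : Integrable (fun ω ↦ ‖u ω‖ ^ 2 - 2 * inner ℝ (u ω) (v ω)) μ := hu2.sub huv
  simp_rw [norm_sub_sq_real]
  rw [integral_add hdiff hv.norm.integrable_sq, integral_sub hu2 huv, integral_const_mul]

theorem integral_norm_sub_smul_sq_le {D G : Ω → E} (hD : MemLp D 2 μ) (hG : MemLp G 2 μ)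
    {L B η : ℝ} (hη : 0 ≤ η) (hDG : -(L * ∫ ω, ‖D ω‖ ^ 2 ∂μ) ≤ ∫ ω, inner ℝ (D ω) (G ω) ∂μ)
    (hGB : ∫ ω, ‖G ω‖ ^ 2 ∂μ ≤ B) :
    ∫ ω, ‖D ω - η • G ω‖ ^ 2 ∂μ ≤ (1 + 2 * η * L) * ∫ ω, ‖D ω‖ ^ 2 ∂μ + η ^ 2 * B := by
  rw [integral_norm_sub_sq (v := fun ω ↦ η • G ω) hD (hG.const_smul η)]
  simp_rw [inner_smul_right, norm_smul, mul_pow, Real.norm_eq_abs, sq_abs]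
  rw [integral_const_mul, integral_const_mul]
  nlinarith [mul_le_mul_of_nonneg_left hDG hη, mul_le_mul_of_nonneg_left hGB (sq_nonneg η)]

theorem neg_mul_integral_le_integral_inner_sub [IsFiniteMeasure μ] {φ : E → E} {L : ℝ}
    (hφ : ∀ a b, ‖φ a - φ b‖ ≤ L * ‖a - b‖) {u v : Ω → E} (hu : MemLp u 2 μ) (hv : MemLp v 2 μ) :
    -(L * ∫ ω, ‖u ω - v ω‖ ^ 2 ∂μ) ≤ ∫ ω, inner ℝ (u ω - v ω) (φ (u ω) - φ (v ω)) ∂μ := by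
  have hLφ := lipschitzWith_of_norm_sub_le hφ
  have hφuv := (hLφ.comp_memLp_of_isFiniteMeasure hu).sub (hLφ.comp_memLp_of_isFiniteMeasure hv)
  rw [← integral_const_mul, ← integral_neg]
  refine integral_mono ((hu.sub hv).norm.integrable_sq.const_mul L).neg
    ((hu.sub hv).integrable_inner hφuv) fun ω ↦ ?_
  have hinner := abs_real_inner_le_norm (u ω - v ω) (φ (u ω) - φ (v ω))
  have hlip := mul_le_mul_of_nonneg_left (hφ (u ω) (v ω)) (norm_nonneg (u ω - v ω))
  linarith [neg_abs_le (inner ℝ (u ω - v ω) (φ (u ω) - φ (v ω)))]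

end InnerProduct

section CondExp

variable {Ω E : Type*} {m mΩ : MeasurableSpace Ω} {μ : Measure Ω}
  [NormedAddCommGroup E] [InnerProductSpace ℝ E] [CompleteSpace E]

theorem integral_inner_condExp (hm : m ≤ mΩ) [SigmaFinite (μ.trim hm)] {D Z : Ω → E}
    (hD : StronglyMeasurable[m] D) (hDZ : Integrable (fun ω ↦ inner ℝ (D ω) (Z ω)) μ)
    (hZ : Integrable Z μ) :
    ∫ ω, inner ℝ (D ω) (Z ω) ∂μ = ∫ ω, inner ℝ (D ω) ((μ[Z|m]) ω) ∂μ := by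
  rw [← integral_condExp hm]
  exact integral_congr_ae (condExp_bilin_of_stronglyMeasurable_left (innerSL ℝ) hD hDZ hZ)

theorem integral_inner_eq_of_condExp_ae_eq (hm : m ≤ mΩ) [IsFiniteMeasure μ] {D Z W : Ω → E}
    (hDm : StronglyMeasurable[m] D) (hD : MemLp D 2 μ) (hZ : MemLp Z 2 μ)
    (hZW : μ[Z|m] =ᵐ[μ] W) :
    ∫ ω, inner ℝ (D ω) (Z ω) ∂μ = ∫ ω, inner ℝ (D ω) (W ω) ∂μ := by
  have := isFiniteMeasure_trim (μ := μ) hm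
  rw [integral_inner_condExp hm hDm (hD.integrable_inner hZ) (hZ.integrable one_le_two)]
  exact integral_congr_ae (by filter_upwards [hZW] with ω hω; rw [hω])

theorem integral_norm_sq_eq_add_of_condExp_ae_eq (hm : m ≤ mΩ) [IsFiniteMeasure μ]
    {Z W : Ω → E} (hZ : MemLp Z 2 μ) (hWm : StronglyMeasurable[m] W) (hW : MemLp W 2 μ)
    (hZW : μ[Z|m] =ᵐ[μ] W) :
    ∫ ω, ‖Z ω‖ ^ 2 ∂μ = ∫ ω, ‖W ω‖ ^ 2 ∂μ + ∫ ω, ‖Z ω - W ω‖ ^ 2 ∂μ := by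
  have hWZ := integral_inner_eq_of_condExp_ae_eq hm hWm hW hZ hZW
  simp_rw [real_inner_self_eq_norm_sq] at hWZ
  rw [integral_norm_sub_sq hZ hW]
  simp_rw [real_inner_comm (W _)]
  rw [hWZ]
  ring

end CondExp

end MeasureTheory

open MeasureTheory

theorem sgd_one_step_expansive_perturbed_general
    {E : Type*} [NormedAddCommGroup E] [InnerProductSpace ℝ E] [FiniteDimensional ℝ E]
    {Ω : Type*} [m : MeasurableSpace Ω] (μ : Measure Ω) [IsProbabilityMeasure μ]
    (𝓕 : MeasurableSpace Ω) (h𝓕 : 𝓕 ≤ m)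
    (f ft h : E → ℝ) (L σl σg : ℝ)
    (hsf : ∀ x y, ‖gradient f x - gradient f y‖ ≤ L * ‖x - y‖)
    (hsft : ∀ x y, ‖gradient ft x - gradient ft y‖ ≤ L * ‖x - y‖)
    (hsh : ∀ x y, ‖gradient h x - gradient h y‖ ≤ L * ‖x - y‖)
    (hfh : ∀ y, ‖gradient f y - gradient h y‖ ^ 2 ≤ σg ^ 2)
    (hfth : ∀ y, ‖gradient ft y - gradient h y‖ ^ 2 ≤ σg ^ 2)
    (x xt g gt : Ω → E)
    (hx : StronglyMeasurable[𝓕] x) (hxt : StronglyMeasurable[𝓕] xt)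
    (hxL2 : MemLp x 2 μ) (hxtL2 : MemLp xt 2 μ)
    (hgL2 : MemLp g 2 μ) (hgtL2 : MemLp gt 2 μ)
    (hg_unbiased : μ[g|𝓕] =ᵐ[μ] fun ω => gradient f (x ω))
    (hgt_unbiased : μ[gt|𝓕] =ᵐ[μ] fun ω => gradient ft (xt ω))
    (hg_var : ∫ ω, ‖g ω - gradient f (x ω)‖ ^ 2 ∂μ ≤ σl ^ 2)
    (hgt_var : ∫ ω, ‖gt ω - gradient ft (xt ω)‖ ^ 2 ∂μ ≤ σl ^ 2)
    (huncorr : ∫ ω, (inner ℝ (g ω - gradient f (x ω)) (gt ω - gradient ft (xt ω)) : ℝ) ∂μ = 0)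
    (hexch : ∫ ω, (inner ℝ (x ω - xt ω) (gradient f (x ω) - gradient ft (xt ω)) : ℝ) ∂μ
        = ∫ ω, (inner ℝ (x ω - xt ω) (gradient f (x ω) - gradient f (xt ω)) : ℝ) ∂μ)
    (η : ℝ) (hη : 0 < η) :
    ∫ ω, ‖(x ω - η • g ω) - (xt ω - η • gt ω)‖ ^ 2 ∂μ ≤
      (1 + 2 * η * L + 6 * η ^ 2 * L ^ 2) * ∫ ω, ‖x ω - xt ω‖ ^ 2 ∂μ
        + 4 * η ^ 2 * (σl ^ 2 + 3 * σg ^ 2) := by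
  have hLf := lipschitzWith_of_norm_sub_le hsf
  have hLft := lipschitzWith_of_norm_sub_le hsft
  have hfx := hLf.comp_memLp_of_isFiniteMeasure hxL2
  have hftxt := hLft.comp_memLp_of_isFiniteMeasure hxtL2
  have hfxm : StronglyMeasurable[𝓕] fun ω ↦ gradient f (x ω) :=
    hLf.continuous.comp_stronglyMeasurable hx
  have hftxtm : StronglyMeasurable[𝓕] fun ω ↦ gradient ft (xt ω) :=
    hLft.continuous.comp_stronglyMeasurable hxt
  have hcond : μ[fun ω ↦ g ω - gt ω|𝓕] =ᵐ[μ] fun ω ↦ gradient f (x ω) - gradient ft (xt ω) := by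
    filter_upwards [condExp_sub (hgL2.integrable one_le_two) (hgtL2.integrable one_le_two) 𝓕,
      hg_unbiased, hgt_unbiased] with ω hsub hω hωt
    exact hsub.trans (congrArg₂ (· - ·) hω hωt)
  have hcross : -(L * ∫ ω, ‖x ω - xt ω‖ ^ 2 ∂μ) ≤ ∫ ω, inner ℝ (x ω - xt ω) (g ω - gt ω) ∂μ := by
    rw [integral_inner_eq_of_condExp_ae_eq (D := fun ω ↦ x ω - xt ω) (Z := fun ω ↦ g ω - gt ω)
      h𝓕 (hx.sub hxt) (hxL2.sub hxtL2) (hgL2.sub hgtL2) hcond, hexch]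
    exact neg_mul_integral_le_integral_inner_sub hsf hxL2 hxtL2
  have hnoise : ∫ ω, ‖(g ω - gt ω) - (gradient f (x ω) - gradient ft (xt ω))‖ ^ 2 ∂μ ≤
      2 * σl ^ 2 := by
    simp_rw [sub_sub_sub_comm (g _) (gt _)]
    rw [integral_norm_sub_sq (u := fun ω ↦ g ω - gradient f (x ω))
      (v := fun ω ↦ gt ω - gradient ft (xt ω)) (hgL2.sub hfx) (hgtL2.sub hftxt), huncorr]
    linarith
  have hsecond : ∫ ω, ‖g ω - gt ω‖ ^ 2 ∂μ ≤
      3 * L ^ 2 * ∫ ω, ‖x ω - xt ω‖ ^ 2 ∂μ + 6 * σg ^ 2 + 2 * σl ^ 2 := by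
    rw [integral_norm_sq_eq_add_of_condExp_ae_eq (Z := fun ω ↦ g ω - gt ω) h𝓕 (hgL2.sub hgtL2)
      (hfxm.sub hftxtm) (hfx.sub hftxt) hcond]
    exact add_le_add (integral_norm_sub_sq_le_of_near_lipschitz hsh hfh hfth hxL2 hxtL2) hnoise
  have hI : 0 ≤ ∫ ω, ‖x ω - xt ω‖ ^ 2 ∂μ := integral_nonneg fun _ ↦ sq_nonneg _
  calc ∫ ω, ‖(x ω - η • g ω) - (xt ω - η • gt ω)‖ ^ 2 ∂μ
      = ∫ ω, ‖(x ω - xt ω) - η • (g ω - gt ω)‖ ^ 2 ∂μ := by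
        simp_rw [smul_sub, sub_sub_sub_comm]
    _ ≤ (1 + 2 * η * L) * ∫ ω, ‖x ω - xt ω‖ ^ 2 ∂μ
          + η ^ 2 * (3 * L ^ 2 * ∫ ω, ‖x ω - xt ω‖ ^ 2 ∂μ + 6 * σg ^ 2 + 2 * σl ^ 2) :=
        integral_norm_sub_smul_sq_le (hxL2.sub hxtL2) (hgL2.sub hgtL2) hη.le hcross hsecond
    _ ≤ _ := by nlinarith [mul_nonneg (mul_nonneg (sq_nonneg η) (sq_nonneg L)) hI,
          mul_nonneg (sq_nonneg η) (sq_nonneg σl), mul_nonneg (sq_nonneg η) (sq_nonneg σg)]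

/-- **One-step expansiveness of coupled SGD updates (perturbed mini-batch).**
Let `f, ft, h` be differentiable with `L`-Lipschitz gradients, with
`‖∇f(y) − ∇h(y)‖² ≤ σg²` and `‖∇ft(y) − ∇h(y)‖² ≤ σg²` for all `y`.  Let `x, xt` be
`𝓕`-measurable square-integrable random vectors and `g, gt` square-integrable stochastic
gradients with conditional expectations `∇f(x)` resp. `∇ft(xt)` given `𝓕`, noise second
moments bounded by `σl²`, uncorrelated noises, and the exchangeability cancellation
`E⟨x − xt, ∇f(x) − ∇ft(xt)⟩ = E⟨x − xt, ∇f(x) − ∇f(xt)⟩`.  Then for every `η > 0`,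
`E‖(x − ηg) − (xt − ηgt)‖² ≤ (1 + 2ηL + 6η²L²) E‖x − xt‖² + 4η²(σl² + 3σg²)`. -/
theorem sgd_one_step_expansive_perturbed
    {E : Type*} [NormedAddCommGroup E] [InnerProductSpace ℝ E] [FiniteDimensional ℝ E]
    {Ω : Type*} [m : MeasurableSpace Ω] (μ : Measure Ω) [IsProbabilityMeasure μ]
    (𝓕 : MeasurableSpace Ω) (h𝓕 : 𝓕 ≤ m)
    (f ft h : E → ℝ) (L σl σg : ℝ) (hL : 0 < L)
    (hdf : Differentiable ℝ f) (hdft : Differentiable ℝ ft) (hdh : Differentiable ℝ h)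
    (hsf : ∀ x y, ‖gradient f x - gradient f y‖ ≤ L * ‖x - y‖)
    (hsft : ∀ x y, ‖gradient ft x - gradient ft y‖ ≤ L * ‖x - y‖)
    (hsh : ∀ x y, ‖gradient h x - gradient h y‖ ≤ L * ‖x - y‖)
    (hfh : ∀ y, ‖gradient f y - gradient h y‖ ^ 2 ≤ σg ^ 2)
    (hfth : ∀ y, ‖gradient ft y - gradient h y‖ ^ 2 ≤ σg ^ 2)
    (x xt g gt : Ω → E)
    (hx : StronglyMeasurable[𝓕] x) (hxt : StronglyMeasurable[𝓕] xt)
    (hxL2 : MemLp x 2 μ) (hxtL2 : MemLp xt 2 μ)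
    (hgL2 : MemLp g 2 μ) (hgtL2 : MemLp gt 2 μ)
    (hg_unbiased : μ[g|𝓕] =ᵐ[μ] fun ω => gradient f (x ω))
    (hgt_unbiased : μ[gt|𝓕] =ᵐ[μ] fun ω => gradient ft (xt ω))
    (hg_var : ∫ ω, ‖g ω - gradient f (x ω)‖ ^ 2 ∂μ ≤ σl ^ 2)
    (hgt_var : ∫ ω, ‖gt ω - gradient ft (xt ω)‖ ^ 2 ∂μ ≤ σl ^ 2)
    (huncorr : ∫ ω, (inner ℝ (g ω - gradient f (x ω)) (gt ω - gradient ft (xt ω)) : ℝ) ∂μ = 0)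
    (hexch : ∫ ω, (inner ℝ (x ω - xt ω) (gradient f (x ω) - gradient ft (xt ω)) : ℝ) ∂μ
        = ∫ ω, (inner ℝ (x ω - xt ω) (gradient f (x ω) - gradient f (xt ω)) : ℝ) ∂μ)
    (η : ℝ) (hη : 0 < η) :
    ∫ ω, ‖(x ω - η • g ω) - (xt ω - η • gt ω)‖ ^ 2 ∂μ ≤
      (1 + 2 * η * L + 6 * η ^ 2 * L ^ 2) * ∫ ω, ‖x ω - xt ω‖ ^ 2 ∂μ
        + 4 * η ^ 2 * (σl ^ 2 + 3 * σg ^ 2) :=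
  sgd_one_step_expansive_perturbed_general (m := m) μ 𝓕 h𝓕 f ft h L σl σg hsf hsft hsh hfh hfth x xt
    g gt hx hxt hxL2 hxtL2 hgL2 hgtL2 hg_unbiased hgt_unbiased hg_var hgt_var huncorr hexch η hη
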